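/- Let μ > 0 be real. Define F₁(ξ) = (ξ − √μ/2)·√(ξ+√μ) for ξ > −√μ, F₂(ξ₁,ξ₂) = 1/(2√((ξ₁+√μ)(ξ₂+√μ))·(√(ξ₁+√μ)+√(ξ₂+√μ))²), and F₃(ξ₁,ξ₂,ξ₃) = 1/(6√μ·(ξ₁+√μ)^{3/2}(ξ₂+√μ)^{3/2}(ξ₃+√μ)^{3/2}). Then for all pairwise distinct ξ₁, ξ₂, ξ₃ > −√μ, the value of F₁(ξ₁)·F₃(ξ₁,ξ₂,ξ₃) + F₂(ξ₁,ξ₂)·F₂(ξ₁,ξ₃) + D₂ + D₃ does not depend on ξ₁ (i.e. it is a function of ξ₂ and ξ₃ only), where D₂ is the derivative at t = ξ₂ of t ↦ (F₂(ξ₁,ξ₃) − F₂(t,ξ₃))/(ξ₁ − t) and D₃ is the derivative at t = ξ₃ of t ↦ (F₂(ξ₁,ξ₂) − F₂(ξ₂,t))/(ξ₁ − t). -/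

import Mathlib

/-- Genus-zero disk amplitude of pure DT. -/
noncomputable def pureDTDisk (μ ξ : ℝ) : ℝ :=
  (ξ - Real.sqrt μ / 2) * Real.sqrt (ξ + Real.sqrt μ)

/-- Genus-zero cylinder amplitude of pure DT. -/
noncomputable def pureDTCylinder (μ ξ₁ ξ₂ : ℝ) : ℝ :=
  1 / (2 * Real.sqrt ((ξ₁ + Real.sqrt μ) * (ξ₂ + Real.sqrt μ)) *
    (Real.sqrt (ξ₁ + Real.sqrt μ) + Real.sqrt (ξ₂ + Real.sqrt μ)) ^ 2)

/-- Genus-zero three-holed-sphere amplitude of pure DT. -/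
noncomputable def pureDTThreeHoled (μ ξ₁ ξ₂ ξ₃ : ℝ) : ℝ :=
  1 / (6 * Real.sqrt μ * (ξ₁ + Real.sqrt μ) ^ ((3 : ℝ) / 2)
    * (ξ₂ + Real.sqrt μ) ^ ((3 : ℝ) / 2) * (ξ₃ + Real.sqrt μ) ^ ((3 : ℝ) / 2))

/-- The (h,N) = (0,3) combination in the perturbative Schwinger–Dyson equation
of pure DT: `F₁(ξ₁)F₃(ξ₁,ξ₂,ξ₃) + F₂(ξ₁,ξ₂)F₂(ξ₁,ξ₃) + D₂ + D₃`. -/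
noncomputable def pureDTSDCombination (μ ξ₁ ξ₂ ξ₃ : ℝ) : ℝ :=
  pureDTDisk μ ξ₁ * pureDTThreeHoled μ ξ₁ ξ₂ ξ₃
    + pureDTCylinder μ ξ₁ ξ₂ * pureDTCylinder μ ξ₁ ξ₃
    + deriv (fun t => (pureDTCylinder μ ξ₁ ξ₃ - pureDTCylinder μ t ξ₃) / (ξ₁ - t)) ξ₂
    + deriv (fun t => (pureDTCylinder μ ξ₁ ξ₂ - pureDTCylinder μ ξ₂ t) / (ξ₁ - t)) ξ₃

/-!
In the uniformising coordinate `η = √(ξ + √μ)` of the spectral curve, `ξᵢ = ηᵢ² - √μ`,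
`F₂ = 1 / (2 η₁ η₂ (η₁ + η₂)²)` and `F₃ = 1 / (6 √μ η₁³ η₂³ η₃³)`, so the combination becomes a
rational function of `η₁, η₂, η₃`. The disk term contributes
`1 / (6 √μ η₂³ η₃³) - 1 / (4 η₁² η₂³ η₃³)`, and the cylinder product together with the two
difference-quotient derivatives adds up to exactly `1 / (4 η₁² η₂³ η₃³)`.
-/

open Real

noncomputable def cylinderEta (u v : ℝ) : ℝ := (2 * u * v * (u + v) ^ 2)⁻¹

lemma pureDTCylinder_comm (μ x y : ℝ) : pureDTCylinder μ x y = pureDTCylinder μ y x := by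
  simp only [pureDTCylinder, mul_comm (x + √μ), add_comm √(x + √μ)]

lemma pureDTCylinder_eq_cylinderEta (μ x : ℝ) {y : ℝ} (hy : 0 ≤ y + √μ) :
    pureDTCylinder μ x y = cylinderEta √(x + √μ) √(y + √μ) := by
  rw [pureDTCylinder, sqrt_mul' _ hy, cylinderEta, one_div]
  ring

lemma pureDTThreeHoled_eq (μ : ℝ) {x y z : ℝ} (hx : 0 ≤ x + √μ) (hy : 0 ≤ y + √μ)
    (hz : 0 ≤ z + √μ) :
    pureDTThreeHoled μ x y z =
      1 / (6 * √μ * √(x + √μ) ^ 3 * √(y + √μ) ^ 3 * √(z + √μ) ^ 3) := by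
  simp only [pureDTThreeHoled, rpow_div_two_eq_sqrt _ hx, rpow_div_two_eq_sqrt _ hy,
    rpow_div_two_eq_sqrt _ hz]
  norm_cast

lemma hasDerivAt_cylinderEta_left {u v : ℝ} (hu : 0 < u) (hv : 0 < v) :
    HasDerivAt (fun w => cylinderEta w v) (-(3 * u + v) / (2 * u ^ 2 * v * (u + v) ^ 3)) u := by
  have hq : HasDerivAt (fun w => 2 * w * v * (w + v) ^ 2)
      (2 * v * (u + v) ^ 2 + 2 * u * v * (2 * (u + v))) u :=
    ((((hasDerivAt_id' u).const_mul 2).mul_const v).mul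
      (((hasDerivAt_id' u).add_const v).pow 2)).congr_deriv (by simp only [Pi.pow_apply]; ring)
  exact (hq.inv (by positivity)).congr_deriv (by field_simp; ring)

lemma hasDerivAt_pureDTCylinder_left {μ x y : ℝ} (hx : -√μ < x) (hy : -√μ < y) :
    HasDerivAt (fun t => pureDTCylinder μ t y)
      (-(3 * √(x + √μ) + √(y + √μ)) /
        (4 * √(x + √μ) ^ 3 * √(y + √μ) * (√(x + √μ) + √(y + √μ)) ^ 3)) x := by
  have hb : 0 < √(x + √μ) := sqrt_pos.mpr (by linarith)
  have hc : 0 < √(y + √μ) := sqrt_pos.mpr (by linarith)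
  have hη : HasDerivAt (fun t => √(t + √μ)) (1 / (2 * √(x + √μ))) x :=
    ((hasDerivAt_id' x).add_const _).sqrt (by linarith)
  simp only [pureDTCylinder_eq_cylinderEta μ _ (by linarith : 0 ≤ y + √μ)]
  refine ((hasDerivAt_cylinderEta_left hb hc).comp x hη).congr_deriv ?_
  field_simp
  ring

lemma HasDerivAt.const_sub_div_sub {f : ℝ → ℝ} {f' a x : ℝ} (C : ℝ) (hf : HasDerivAt f f' x)
    (hx : x ≠ a) :
    HasDerivAt (fun t => (C - f t) / (a - t)) ((C - f x - f' * (a - x)) / (a - x) ^ 2) x :=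
  (((hasDerivAt_const x C).sub hf).div ((hasDerivAt_const x a).sub (hasDerivAt_id' x))
    (sub_ne_zero.mpr hx.symm)).congr_deriv (by simp only [Pi.sub_apply]; ring)

lemma deriv_pureDTCylinder_slope {μ a x y : ℝ} (hx : -√μ < x) (hy : -√μ < y) (hxa : x ≠ a) :
    deriv (fun t => (pureDTCylinder μ a y - pureDTCylinder μ t y) / (a - t)) x =
      (pureDTCylinder μ a y - pureDTCylinder μ x y
        + (3 * √(x + √μ) + √(y + √μ)) /
          (4 * √(x + √μ) ^ 3 * √(y + √μ) * (√(x + √μ) + √(y + √μ)) ^ 3) * (a - x))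
        / (a - x) ^ 2 := by
  rw [((hasDerivAt_pureDTCylinder_left hx hy).const_sub_div_sub _ hxa).deriv]
  ring

lemma pureDTSDCombination_eta_identity {s a b c ξ₁ ξ₂ ξ₃ : ℝ} (hs : 0 < s) (ha : 0 < a) (hb : 0 < b)
    (hc : 0 < c) (ha2 : a ^ 2 = ξ₁ + s) (hb2 : b ^ 2 = ξ₂ + s) (hc2 : c ^ 2 = ξ₃ + s)
    (h₁₂ : ξ₁ ≠ ξ₂) (h₁₃ : ξ₁ ≠ ξ₃) :
    (ξ₁ - s / 2) * a * (1 / (6 * s * a ^ 3 * b ^ 3 * c ^ 3))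
      + cylinderEta a b * cylinderEta a c
      + (cylinderEta a c - cylinderEta b c
          + (3 * b + c) / (4 * b ^ 3 * c * (b + c) ^ 3) * (ξ₁ - ξ₂)) / (ξ₁ - ξ₂) ^ 2
      + (cylinderEta a b - cylinderEta c b
          + (3 * c + b) / (4 * c ^ 3 * b * (c + b) ^ 3) * (ξ₁ - ξ₃)) / (ξ₁ - ξ₃) ^ 2
      = 1 / (6 * s * b ^ 3 * c ^ 3) := by
  have h₁₂' := sub_ne_zero.mpr h₁₂
  have h₁₃' := sub_ne_zero.mpr h₁₃
  obtain rfl : ξ₁ = a ^ 2 - s := by linarith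
  obtain rfl : ξ₂ = b ^ 2 - s := by linarith
  obtain rfl : ξ₃ = c ^ 2 - s := by linarith
  simp only [cylinderEta]
  field_simp
  ring

lemma pureDTSDCombination_eq {μ ξ₁ ξ₂ ξ₃ : ℝ} (hμ : 0 < μ) (h₁ : -√μ < ξ₁) (h₂ : -√μ < ξ₂)
    (h₃ : -√μ < ξ₃) (h₁₂ : ξ₁ ≠ ξ₂) (h₁₃ : ξ₁ ≠ ξ₃) :
    pureDTSDCombination μ ξ₁ ξ₂ ξ₃ = 1 / (6 * √μ * √(ξ₂ + √μ) ^ 3 * √(ξ₃ + √μ) ^ 3) := by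
  have hpos {ξ : ℝ} (h : -√μ < ξ) : 0 < ξ + √μ := by linarith
  rw [pureDTSDCombination]
  simp only [pureDTCylinder_comm μ ξ₂]
  rw [deriv_pureDTCylinder_slope h₂ h₃ h₁₂.symm, deriv_pureDTCylinder_slope h₃ h₂ h₁₃.symm,
    pureDTDisk, pureDTThreeHoled_eq μ (hpos h₁).le (hpos h₂).le (hpos h₃).le]
  simp only [pureDTCylinder_eq_cylinderEta μ _ (hpos h₂).le,
    pureDTCylinder_eq_cylinderEta μ _ (hpos h₃).le]
  exact pureDTSDCombination_eta_identity (sqrt_pos.mpr hμ) (sqrt_pos.mpr (hpos h₁))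
    (sqrt_pos.mpr (hpos h₂)) (sqrt_pos.mpr (hpos h₃)) (sq_sqrt (hpos h₁).le)
    (sq_sqrt (hpos h₂).le) (sq_sqrt (hpos h₃).le) h₁₂ h₁₃

theorem pure_DT_genus_zero_three_point_SD_independence_general
    (μ : ℝ) (hμ : 0 < μ) (ξ₁ ξ₁' ξ₂ ξ₃ : ℝ)
    (h₁ : -Real.sqrt μ < ξ₁) (h₁' : -Real.sqrt μ < ξ₁')
    (h₂ : -Real.sqrt μ < ξ₂) (h₃ : -Real.sqrt μ < ξ₃)
    (h₁₂ : ξ₁ ≠ ξ₂) (h₁₃ : ξ₁ ≠ ξ₃)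
    (h₁₂' : ξ₁' ≠ ξ₂) (h₁₃' : ξ₁' ≠ ξ₃) :
    pureDTSDCombination μ ξ₁ ξ₂ ξ₃ = pureDTSDCombination μ ξ₁' ξ₂ ξ₃ := by
  rw [pureDTSDCombination_eq hμ h₁ h₂ h₃ h₁₂ h₁₃, pureDTSDCombination_eq hμ h₁' h₂ h₃ h₁₂' h₁₃']

/-- The (h,N) = (0,3) case of the perturbative Schwinger–Dyson equation of pure DT
(Proposition 1): the displayed combination does not depend on `ξ₁`. -/
theorem pure_DT_genus_zero_three_point_SD_independence
    (μ : ℝ) (hμ : 0 < μ) (ξ₁ ξ₁' ξ₂ ξ₃ : ℝ)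
    (h₁ : -Real.sqrt μ < ξ₁) (h₁' : -Real.sqrt μ < ξ₁')
    (h₂ : -Real.sqrt μ < ξ₂) (h₃ : -Real.sqrt μ < ξ₃)
    (h₁₂ : ξ₁ ≠ ξ₂) (h₁₃ : ξ₁ ≠ ξ₃) (h₂₃ : ξ₂ ≠ ξ₃)
    (h₁₂' : ξ₁' ≠ ξ₂) (h₁₃' : ξ₁' ≠ ξ₃) :
    pureDTSDCombination μ ξ₁ ξ₂ ξ₃ = pureDTSDCombination μ ξ₁' ξ₂ ξ₃ :=
  pure_DT_genus_zero_three_point_SD_independence_general μ hμ ξ₁ ξ₁' ξ₂ ξ₃ h₁ h₁' h₂ h₃ h₁₂ h₁₃ h₁₂'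
    h₁₃'
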